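/- For any a, b ∈ k, any subgroup F ⊆ G and any 2-cocycle ψ ∈ Z²(F,k^×), the algebras K₀₁(a,F,ψ) and K₁₀(b,F,ψ) are right H-simple left H-comodule algebras with trivial coinvariants. -/

import Mathlib

open scoped TensorProduct

noncomputable section

/-- A left `H`-comodule algebra structure on the `k`-algebra `A`: the coaction is an algebra
map `A → H ⊗ A` which is coassociative and counital. -/
structure LeftComodAlg (k : Type*) [Field k] (H : Type*) [Ring H] [HopfAlgebra k H]
    (A : Type*) [Ring A] [Algebra k A] where
  ρ : A →ₐ[k] H ⊗[k] A
  coassoc : ∀ a : A,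
    TensorProduct.map (Coalgebra.comul (R := k)) LinearMap.id (ρ a) =
      (TensorProduct.assoc k H H A).symm (TensorProduct.map LinearMap.id ρ.toLinearMap (ρ a))
  counital : ∀ a : A,
    TensorProduct.map (Coalgebra.counit (R := k)) LinearMap.id (ρ a) = (1 : k) ⊗ₜ[k] a

namespace LeftComodAlg

variable {k : Type*} [Field k] {H : Type*} [Ring H] [HopfAlgebra k H]
  {A : Type*} [Ring A] [Algebra k A]

/-- The coinvariants of a comodule algebra are trivial. -/
def TrivialCoinv (c : LeftComodAlg k H A) : Prop :=
  ∀ a : A, c.ρ a = (1 : H) ⊗ₜ[k] a → ∃ t : k, a = t • (1 : A)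

/-- A submodule is costable if the coaction maps it into `H ⊗ I`. -/
def Costable (c : LeftComodAlg k H A) (I : Submodule k A) : Prop :=
  ∀ a ∈ I, c.ρ a ∈ LinearMap.range (LinearMap.lTensor H I.subtype)

/-- `A` is right `H`-simple: it has no nontrivial costable right ideal. -/
def RightHSimple (c : LeftComodAlg k H A) : Prop :=
  ∀ I : Submodule k A, (∀ a ∈ I, ∀ b : A, a * b ∈ I) → c.Costable I → I = ⊥ ∨ I = ⊤

end LeftComodAlg

/-- A group-like element of a Hopf algebra. -/
def IsGrouplike (k : Type*) [Field k] {H : Type*} [Ring H] [HopfAlgebra k H] (g : H) : Prop :=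
  g ≠ 0 ∧ Coalgebra.comul (R := k) g = g ⊗ₜ[k] g ∧ Coalgebra.counit (R := k) g = (1 : k)
/-- The group `G = ℤ/n × ℤ/n` (written additively; `(1,0)` corresponds to `(g,1)` and
`(0,1)` to `(1,g)`). -/
abbrev GGrp (n : ℕ) := ZMod n × ZMod n

/-- A normalized 2-cocycle on an additively written abelian group `G` with values in `k^×`. -/
structure Cocycle2 (G : Type*) [AddCommGroup G] (k : Type*) [Field k] where
  c : G → G → kˣ
  cocycle : ∀ f f' f'' : G, c f f' * c (f + f') f'' = c f' f'' * c f (f' + f'')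
  norm_left : ∀ f : G, c 0 f = 1
  norm_right : ∀ f : G, c f 0 = 1

/-- Two 2-cocycles are cohomologous on the subgroup `F` (their restrictions to `F` differ by
a coboundary), i.e. they give the same class in `H²(F, k^×)`. -/
def CohomologousOn {n : ℕ} {k : Type*} [Field k] (F : AddSubgroup (GGrp n))
    (ψ ψ' : Cocycle2 (GGrp n) k) : Prop :=
  ∃ c : GGrp n → kˣ, c 0 = 1 ∧
    ∀ f ∈ F, ∀ f' ∈ F, ψ'.c f f' = c f * c f' * (c (f + f'))⁻¹ * ψ.c f f'

/-- A 2-cocycle `ψ` is compatible with the subgroup `F` if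
`qⁱ ψ((g,1),f)/ψ(f,(g,1)) = qʲ ψ((1,g⁻¹),f)/ψ(f,(1,g⁻¹))` for every `f = (gⁱ,gʲ) ∈ F`. -/
def CocycleCompatible {n : ℕ} {k : Type*} [Field k] (q : k) (ψ : Cocycle2 (GGrp n) k)
    (F : AddSubgroup (GGrp n)) : Prop :=
  ∀ f ∈ F,
    q ^ f.1.val * ((ψ.c ((1 : ZMod n), (0 : ZMod n)) f : k) * ((ψ.c f (1, 0) : k))⁻¹) =
      q ^ f.2.val * ((ψ.c ((0 : ZMod n), (-1 : ZMod n)) f : k) * ((ψ.c f (0, -1) : k))⁻¹)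

/-- A presentation of the Hopf algebra `H_{(χ₁,χ₂)}` (for trivial characters this is
`H = T_q ⊗ T_{q⁻¹}`): it is generated by the group `G = ℤ/n × ℤ/n` (via `fG`) together with
`x, y`, subject to `xⁿ = 0 = yⁿ`, `xy = χ₂(g,1)·yx`, `f·x = χ₁(f)qⁱ·x·f`,
`f·y = χ₂(f)qʲ·y·f` for `f = (gⁱ,gʲ)`, with `Δ(x) = x ⊗ 1 + (g,1) ⊗ x`,
`Δ(y) = y ⊗ 1 + (1,g⁻¹) ⊗ y`, `Δ(f) = f ⊗ f`, and with basis `{xⁱyʲf}`. -/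
structure HPres (k : Type*) [Field k] (n : ℕ) (q : k) (χ₁ χ₂ : GGrp n → kˣ)
    (H : Type*) [Ring H] [HopfAlgebra k H] where
  x : H
  y : H
  fG : GGrp n → H
  chi_compat : ((χ₁ ((0 : ZMod n), (-1 : ZMod n)) : kˣ) : k) * ((χ₂ ((1 : ZMod n), (0 : ZMod n)) : kˣ) : k) = 1
  fG_zero : fG 0 = 1
  fG_mul : ∀ f f' : GGrp n, fG f * fG f' = fG (f + f')
  x_pow : x ^ n = 0
  y_pow : y ^ n = 0
  xy : x * y = ((χ₂ ((1 : ZMod n), (0 : ZMod n)) : kˣ) : k) • (y * x)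
  fx : ∀ f : GGrp n, fG f * x = (((χ₁ f : kˣ) : k) * q ^ f.1.val) • (x * fG f)
  fy : ∀ f : GGrp n, fG f * y = (((χ₂ f : kˣ) : k) * q ^ f.2.val) • (y * fG f)
  comul_f : ∀ f : GGrp n, Coalgebra.comul (R := k) (fG f) = fG f ⊗ₜ[k] fG f
  comul_x : Coalgebra.comul (R := k) x = x ⊗ₜ[k] 1 + fG (1, 0) ⊗ₜ[k] x
  comul_y : Coalgebra.comul (R := k) y = y ⊗ₜ[k] 1 + fG (0, -1) ⊗ₜ[k] y
  counit_f : ∀ f : GGrp n, Coalgebra.counit (R := k) (fG f) = (1 : k)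
  counit_x : Coalgebra.counit (R := k) x = (0 : k)
  counit_y : Coalgebra.counit (R := k) y = (0 : k)
  bas : Module.Basis (Fin n × Fin n × GGrp n) k H
  bas_eq : ∀ p : Fin n × Fin n × GGrp n,
    bas p = x ^ (p.1 : ℕ) * y ^ (p.2.1 : ℕ) * fG p.2.2

namespace HPres

variable {k : Type*} [Field k] {n : ℕ} {q : k} {χ₁ χ₂ : GGrp n → kˣ}
  {H : Type*} [Ring H] [HopfAlgebra k H]

/-- Projection of `H` onto the line `k·x`, relative to the standard basis. -/
def px [NeZero n] (P : HPres k n q χ₁ χ₂ H) : H →ₗ[k] H :=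
  (P.bas.coord ((1 : Fin n), (0 : Fin n), (0 : GGrp n))).smulRight
    (P.bas ((1 : Fin n), (0 : Fin n), (0 : GGrp n)))

/-- Projection of `H` onto the line `k·y`, relative to the standard basis. -/
def py [NeZero n] (P : HPres k n q χ₁ χ₂ H) : H →ₗ[k] H :=
  (P.bas.coord ((0 : Fin n), (1 : Fin n), (0 : GGrp n))).smulRight
    (P.bas ((0 : Fin n), (1 : Fin n), (0 : GGrp n)))

/-- The line `V₁ = k·x`. -/
def V1 (P : HPres k n q χ₁ χ₂ H) : Submodule k H := Submodule.span k {P.x}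

/-- The line `V₂ = k·y`. -/
def V2 (P : HPres k n q χ₁ χ₂ H) : Submodule k H := Submodule.span k {P.y}

/-- The plane `V₁ ⊕ V₂ = k·x ⊕ k·y`. -/
def V12 (P : HPres k n q χ₁ χ₂ H) : Submodule k H := Submodule.span k {P.x, P.y}

/-- The action of `f = (gⁱ,gʲ) ∈ G` on `V₁ ⊕ V₂`: `x ↦ χ₁(f)qⁱ x`, `y ↦ χ₂(f)qʲ y`
(extended by the basis projections). -/
def actG [NeZero n] (P : HPres k n q χ₁ χ₂ H) (f : GGrp n) : H →ₗ[k] H :=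
  (((χ₁ f : kˣ) : k) * q ^ f.1.val) • P.px + (((χ₂ f : kˣ) : k) * q ^ f.2.val) • P.py

/-- For `w = (v₁,v₂) ∈ V₁ ⊕ V₂`, the element `[w] = v₁ + v₂·(g,g)`. -/
def br [NeZero n] (P : HPres k n q χ₁ χ₂ H) (w : H) : H :=
  P.px w + P.py w * P.fG (1, 1)

/-- For `w = (v₁,v₂) ∈ V₁ ⊕ V₂`, the element `[w]~ = v₂ + v₁·(g⁻¹,g⁻¹)`. -/
def tbr [NeZero n] (P : HPres k n q χ₁ χ₂ H) (w : H) : H :=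
  P.py w + P.px w * P.fG (-1, -1)

/-- The degree-`m` projection of `H` relative to the coradical grading, for which
`xⁱyʲf` is homogeneous of degree `i + j`. -/
def grProj (P : HPres k n q χ₁ χ₂ H) (m : ℕ) : H →ₗ[k] H :=
  P.bas.constr k (fun p : Fin n × Fin n × GGrp n =>
    if (p.1 : ℕ) + (p.2.1 : ℕ) = m then P.bas p else 0)

/-- Conjugation by the group-like element `fG f`: `h ↦ fG f * h * fG (-f)`. -/
def conj (P : HPres k n q χ₁ χ₂ H) (f : GGrp n) : H →ₗ[k] H :=
  LinearMap.mulLeft k (P.fG f) ∘ₗ LinearMap.mulRight k (P.fG (-f))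

end HPres

/-- A subalgebra `C ⊆ H` is a left coideal subalgebra if `Δ(C) ⊆ H ⊗ C`. -/
def IsLeftCoidealSubalgebra {k : Type*} [Field k] {H : Type*} [Ring H] [HopfAlgebra k H]
    (C : Subalgebra k H) : Prop :=
  ∀ c ∈ C, Coalgebra.comul (R := k) c ∈
    LinearMap.range (LinearMap.lTensor H (Subalgebra.toSubmodule C).subtype)

/-- A subalgebra of `H` is homogeneous (for the coradical grading) if it is stable under all
the homogeneous projections. -/
def IsHomogeneousSubalgebra {k : Type*} [Field k] {n : ℕ} {q : k} {χ₁ χ₂ : GGrp n → kˣ}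
    {H : Type*} [Ring H] [HopfAlgebra k H] (P : HPres k n q χ₁ χ₂ H)
    (C : Subalgebra k H) : Prop :=
  ∀ c ∈ C, ∀ m : ℕ, P.grProj m c ∈ C

/-- A coideal subalgebra datum `(W¹, W², W³, F)` for a presented Hopf algebra
`H_{(χ₁,χ₂)}`. -/
structure CoidealDatum {k : Type*} [Field k] {n : ℕ} [NeZero n] {q : k}
    {χ₁ χ₂ : GGrp n → kˣ} {H : Type*} [Ring H] [HopfAlgebra k H]
    (P : HPres k n q χ₁ χ₂ H) where
  W1 : Submodule k H
  W2 : Submodule k H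
  W3 : Submodule k H
  F : AddSubgroup (GGrp n)
  hW1 : W1 ≤ P.V1
  hW2 : W2 ≤ P.V2
  hW3 : W3 ≤ P.V12
  hcap1 : (W1 ⊔ W2 ⊔ W3) ⊓ P.V1 = W1
  hcap2 : (W1 ⊔ W2 ⊔ W3) ⊓ P.V2 = W2
  hW3V1 : W3 ⊓ P.V1 = ⊥
  hW3V2 : W3 ⊓ P.V2 = ⊥
  indep1 : W1 ⊓ (W2 ⊔ W3) = ⊥
  indep2 : W2 ⊓ (W1 ⊔ W3) = ⊥
  indep3 : W3 ⊓ (W1 ⊔ W2) = ⊥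
  hF1 : ∀ f ∈ F, ∀ v ∈ W1, P.actG f v ∈ W1
  hF2 : ∀ f ∈ F, ∀ v ∈ W2, P.actG f v ∈ W2
  hF3 : ∀ f ∈ F, ∀ v ∈ W3, P.actG f v ∈ W3
  hgg : W3 ≠ ⊥ → ((1 : ZMod n), (1 : ZMod n)) ∈ F

/-- The coideal subalgebra `C(W¹,W²,W³,F)` attached to a coideal subalgebra datum: the
subalgebra generated by `kF`, the elements of `W¹ ⊕ W²`, and `{[w], [w]~ : w ∈ W³}`. -/
def CoidealDatum.C {k : Type*} [Field k] {n : ℕ} [NeZero n] {q : k}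
    {χ₁ χ₂ : GGrp n → kˣ} {H : Type*} [Ring H] [HopfAlgebra k H]
    {P : HPres k n q χ₁ χ₂ H} (d : CoidealDatum P) : Subalgebra k H :=
  Algebra.adjoin k
    ((P.fG '' (d.F : Set (GGrp n))) ∪ (d.W1 : Set H) ∪ (d.W2 : Set H) ∪
      (P.br '' (d.W3 : Set H)) ∪ (P.tbr '' (d.W3 : Set H)))
section ComodPres

variable (k : Type*) [Field k] (n : ℕ) (q : k)
  (H : Type*) [Ring H] [HopfAlgebra k H]

/-- A presentation of the twisted group algebra `k_ψF` as a left `H`-comodule algebra (the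
comodule algebra with basis `{e_f : f ∈ F}`, multiplication `e_f e_{f'} = ψ(f,f') e_{ff'}` and
coaction `e_f ↦ f ⊗ e_f`), relative to the given coaction `co`. -/
structure KPsiPres (P : HPres k n q 1 1 H) (F : AddSubgroup (GGrp n))
    (ψ : Cocycle2 (GGrp n) k)
    {A : Type*} [Ring A] [Algebra k A] (co : LeftComodAlg k H A) where
  e : F → A
  e_zero : e 0 = 1
  e_mul : ∀ f f' : F, e f * e f' = ((ψ.c ↑f ↑f' : kˣ) : k) • e (f + f')
  co_e : ∀ f : F, co.ρ (e f) = P.fG ↑f ⊗ₜ[k] e f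
  li : LinearIndependent k e
  span : ⊤ ≤ Submodule.span k (Set.range e)

/-- A presentation of the left `H`-comodule algebra `K₀₁(a,F,ψ)` (generated by `z` and the
`e_f`), relative to the given coaction `co`. -/
structure K01Pres (P : HPres k n q 1 1 H) (a : k) (F : AddSubgroup (GGrp n))
    (ψ : Cocycle2 (GGrp n) k)
    {A : Type*} [Ring A] [Algebra k A] (co : LeftComodAlg k H A) where
  z : A
  e : F → A
  e_zero : e 0 = 1
  z_pow : z ^ n = a • (1 : A)
  e_mul : ∀ f f' : F, e f * e f' = ((ψ.c ↑f ↑f' : kˣ) : k) • e (f + f')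
  ez : ∀ f : F, e f * z = q ^ (f : GGrp n).1.val • (z * e f)
  co_e : ∀ f : F, co.ρ (e f) = P.fG ↑f ⊗ₜ[k] e f
  co_z : co.ρ z = P.x ⊗ₜ[k] (1 : A) + P.fG (1, 0) ⊗ₜ[k] z
  li : LinearIndependent k (fun p : F × Fin n => e p.1 * z ^ (p.2 : ℕ))
  span : ⊤ ≤ Submodule.span k (Set.range fun p : F × Fin n => e p.1 * z ^ (p.2 : ℕ))

/-- A presentation of the left `H`-comodule algebra `K₁₀(b,F,ψ)` (generated by `u` and the
`e_f`), relative to the given coaction `co`. -/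
structure K10Pres (P : HPres k n q 1 1 H) (b : k) (F : AddSubgroup (GGrp n))
    (ψ : Cocycle2 (GGrp n) k)
    {A : Type*} [Ring A] [Algebra k A] (co : LeftComodAlg k H A) where
  u : A
  e : F → A
  e_zero : e 0 = 1
  u_pow : u ^ n = b • (1 : A)
  e_mul : ∀ f f' : F, e f * e f' = ((ψ.c ↑f ↑f' : kˣ) : k) • e (f + f')
  eu : ∀ f : F, e f * u = q ^ (f : GGrp n).2.val • (u * e f)
  co_e : ∀ f : F, co.ρ (e f) = P.fG ↑f ⊗ₜ[k] e f
  co_u : co.ρ u = P.y ⊗ₜ[k] (1 : A) + P.fG (0, -1) ⊗ₜ[k] u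
  li : LinearIndependent k (fun p : F × Fin n => e p.1 * u ^ (p.2 : ℕ))
  span : ⊤ ≤ Submodule.span k (Set.range fun p : F × Fin n => e p.1 * u ^ (p.2 : ℕ))

/-- A presentation of the left `H`-comodule algebra `K₁₁(a,b,ξ,F,ψ)` (generated by `z`, `u`
and the `e_f`, with `zu - uz = ξ e_{(g,g⁻¹)}`), relative to the given coaction `co`. -/
structure K11Pres (P : HPres k n q 1 1 H) (a b ξ : k) (F : AddSubgroup (GGrp n))
    (ψ : Cocycle2 (GGrp n) k)
    {A : Type*} [Ring A] [Algebra k A] (co : LeftComodAlg k H A) where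
  z : A
  u : A
  e : F → A
  e_zero : e 0 = 1
  z_pow : z ^ n = a • (1 : A)
  u_pow : u ^ n = b • (1 : A)
  zu_mem : ∀ h : ((1 : ZMod n), (-1 : ZMod n)) ∈ F,
    z * u - u * z = ξ • e ⟨((1 : ZMod n), (-1 : ZMod n)), h⟩
  zu_not_mem : ((1 : ZMod n), (-1 : ZMod n)) ∉ F → z * u - u * z = 0
  e_mul : ∀ f f' : F, e f * e f' = ((ψ.c ↑f ↑f' : kˣ) : k) • e (f + f')
  ez : ∀ f : F, e f * z = q ^ (f : GGrp n).1.val • (z * e f)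
  eu : ∀ f : F, e f * u = q ^ (f : GGrp n).2.val • (u * e f)
  co_e : ∀ f : F, co.ρ (e f) = P.fG ↑f ⊗ₜ[k] e f
  co_z : co.ρ z = P.x ⊗ₜ[k] (1 : A) + P.fG (1, 0) ⊗ₜ[k] z
  co_u : co.ρ u = P.y ⊗ₜ[k] (1 : A) + P.fG (0, -1) ⊗ₜ[k] u
  li : LinearIndependent k
    (fun p : F × Fin n × Fin n => e p.1 * z ^ (p.2.1 : ℕ) * u ^ (p.2.2 : ℕ))
  span : ⊤ ≤ Submodule.span k
    (Set.range fun p : F × Fin n × Fin n => e p.1 * z ^ (p.2.1 : ℕ) * u ^ (p.2.2 : ℕ))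

/-- A presentation of the left `H`-comodule algebra `L(ξ,μ,F,ψ)` (generated by `w` and the
`e_f`, with `λ(w) = ξ·x ⊗ 1 + y(g,g) ⊗ e_{(g,g)} + (g,1) ⊗ w`), relative to the given
coaction `co`; here `(g,g) ∈ F`. -/
structure LPres (P : HPres k n q 1 1 H) (F : AddSubgroup (GGrp n))
    (hF : ((1 : ZMod n), (1 : ZMod n)) ∈ F) (ψ : Cocycle2 (GGrp n) k) (ξ μ : k)
    {A : Type*} [Ring A] [Algebra k A] (co : LeftComodAlg k H A) where
  w : A
  e : F → A
  e_zero : e 0 = 1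
  w_pow : w ^ n = μ • (1 : A)
  e_mul : ∀ f f' : F, e f * e f' = ((ψ.c ↑f ↑f' : kˣ) : k) • e (f + f')
  ew : ∀ f : F, e f * w = q ^ (f : GGrp n).1.val • (w * e f)
  co_e : ∀ f : F, co.ρ (e f) = P.fG ↑f ⊗ₜ[k] e f
  co_w : co.ρ w = ξ • (P.x ⊗ₜ[k] (1 : A)) +
    (P.y * P.fG (1, 1)) ⊗ₜ[k] e ⟨((1 : ZMod n), (1 : ZMod n)), hF⟩ + P.fG (1, 0) ⊗ₜ[k] w
  li : LinearIndependent k (fun p : F × Fin n => e p.1 * w ^ (p.2 : ℕ))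
  span : ⊤ ≤ Submodule.span k (Set.range fun p : F × Fin n => e p.1 * w ^ (p.2 : ℕ))

end ComodPres

/-!
Both algebras have a basis `e_f zⁱ` (`f ∈ F`, `i < n`; for `K₁₀` read `u`, `y` for `z`, `x`), and
the coaction is triangular in the `z`-degree: `ρ(e_f zⁱ) = xⁱf ⊗ sⁱ e_f` plus terms whose
`H`-factor has smaller `x`-degree, where `f x = s x f` and `s ≠ 0` because `f` is invertible.
So if `a ≠ 0` has top `z`-degree `m` and `e_f zᵐ` occurs in it with coefficient `r ≠ 0`, then
applying the coordinate of `xᵐf` to the left factor of `ρ(a)` yields a nonzero multiple of `e_f`.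
For a costable right ideal this puts the unit `e_f` into the ideal. For a coinvariant,
`ρ(a) = 1 ⊗ a` has no component at `xᵐf` with `m > 0`, so `m = 0` and the coordinate at `1`
gives `a = r · 1`.
-/

section SliceMap

variable {R : Type*} [CommSemiring R] {M : Type*} [AddCommMonoid M] [Module R M]
  {N : Type*} [AddCommMonoid N] [Module R N]

def sliceLeft (φ : M →ₗ[R] R) : M ⊗[R] N →ₗ[R] N :=
  (TensorProduct.lid R N).toLinearMap ∘ₗ φ.rTensor N

@[simp]
theorem sliceLeft_tmul (φ : M →ₗ[R] R) (m : M) (x : N) :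
    sliceLeft φ (m ⊗ₜ[R] x) = φ m • x := by
  simp [sliceLeft]

theorem sliceLeft_mem_of_mem_range_lTensor (φ : M →ₗ[R] R) {I : Submodule R N}
    {t : M ⊗[R] N} (ht : t ∈ LinearMap.range (I.subtype.lTensor M)) : sliceLeft φ t ∈ I := by
  obtain ⟨t, rfl⟩ := ht
  induction t using TensorProduct.induction_on with
  | zero => simp
  | tmul m x => simpa using I.smul_mem (φ m) x.2
  | add t t' ht ht' => simpa using I.add_mem ht ht'

end SliceMap

theorem Module.Basis.exists_repr_ne_zero_and_mem_span_deg_le {R M ι : Type*} [Semiring R]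
    [AddCommMonoid M] [Module R M] (b : Module.Basis ι R M) (deg : ι → ℕ) {a : M} (ha : a ≠ 0) :
    ∃ i, b.repr a i ≠ 0 ∧ a ∈ Submodule.span R (b '' {j | deg j ≤ deg i}) := by
  have hsupp : (b.repr a).support.Nonempty := by simpa using ha
  obtain ⟨i, hi, hmax⟩ := (b.repr a).support.exists_max_image deg hsupp
  refine ⟨i, Finsupp.mem_support_iff.1 hi, Submodule.span_mono ?_ (b.mem_span_repr_support a)⟩
  exact Set.image_mono fun j hj => hmax j hj

theorem mul_pow_eq_smul_pow_mul {R H : Type*} [CommSemiring R] [Semiring H] [Algebra R H]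
    {g x : H} {c : R} (h : g * x = c • (x * g)) (l : ℕ) : g * x ^ l = c ^ l • (x ^ l * g) := by
  induction l with
  | zero => simp
  | succ l ih =>
    rw [pow_succ, ← mul_assoc, ih, smul_mul_assoc, mul_assoc, h, mul_smul_comm, smul_smul,
      ← mul_assoc, ← pow_succ, pow_succ c]

section SkewPrimitive

variable {k : Type*} [Field k] {H : Type*} [Ring H] [Algebra k H] {A : Type*} [Ring A]
  [Algebra k A] {G : Type*} {X : H} {u : G → H} {s : G → k}

variable (k A) in
def xDegLT (X : H) (u : G → H) (i : ℕ) : Submodule k (H ⊗[k] A) :=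
  Submodule.span k {t | ∃ l < i, ∃ h a, (X ^ l * u h) ⊗ₜ[k] a = t}

theorem tmul_mem_xDegLT {l i : ℕ} (hl : l < i) (h : G) (a : A) :
    (X ^ l * u h) ⊗ₜ[k] a ∈ xDegLT k A X u i :=
  Submodule.subset_span ⟨l, hl, h, a, rfl⟩

theorem xDegLT_mono {i j : ℕ} (hij : i ≤ j) : xDegLT k A X u i ≤ xDegLT k A X u j :=
  Submodule.span_mono fun _ ⟨l, hl, h, a, ht⟩ => ⟨l, hl.trans_le hij, h, a, ht⟩

theorem xDegLT_le_comap {i j : ℕ} {T : H ⊗[k] A →ₗ[k] H ⊗[k] A}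
    (hT : ∀ l < i, ∀ h a, T ((X ^ l * u h) ⊗ₜ[k] a) ∈ xDegLT k A X u j) :
    xDegLT k A X u i ≤ (xDegLT k A X u j).comap T :=
  Submodule.span_le.2 fun _ ⟨l, hl, h, a, ht⟩ => ht ▸ hT l hl h a

theorem mul_tmul_one_mem_xDegLT (hX : ∀ h, u h * X = s h • (X * u h)) {i : ℕ}
    {t : H ⊗[k] A} (ht : t ∈ xDegLT k A X u i) : t * (X ⊗ₜ[k] 1) ∈ xDegLT k A X u (i + 1) := by
  refine xDegLT_le_comap (T := LinearMap.mulRight k (X ⊗ₜ[k] (1 : A))) (fun l hl h a => ?_) ht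
  have hsucc : (X ^ l * u h) * X = X ^ (l + 1) * (s h • u h) := by
    rw [mul_assoc, hX, mul_smul_comm, mul_smul_comm, ← mul_assoc, ← pow_succ]
  rw [LinearMap.mulRight_apply, Algebra.TensorProduct.tmul_mul_tmul, hsucc, mul_smul_comm,
    TensorProduct.smul_tmul]
  exact tmul_mem_xDegLT (by omega) h _

theorem mul_tmul_mem_xDegLT [Add G] (hu : ∀ g h, u g * u h = u (g + h)) {i : ℕ} (g : G) (c : A)
    {t : H ⊗[k] A} (ht : t ∈ xDegLT k A X u i) : t * (u g ⊗ₜ[k] c) ∈ xDegLT k A X u i := by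
  refine xDegLT_le_comap (T := LinearMap.mulRight k (u g ⊗ₜ[k] c)) (fun l hl h a => ?_) ht
  rw [LinearMap.mulRight_apply, Algebra.TensorProduct.tmul_mul_tmul, mul_assoc, hu]
  exact tmul_mem_xDegLT hl _ _

theorem tmul_mul_mem_xDegLT [Add G] (hu : ∀ g h, u g * u h = u (g + h))
    (hX : ∀ h, u h * X = s h • (X * u h)) {i : ℕ} (g : G) (c : A) {t : H ⊗[k] A}
    (ht : t ∈ xDegLT k A X u i) : (u g ⊗ₜ[k] c) * t ∈ xDegLT k A X u i := by
  refine xDegLT_le_comap (T := LinearMap.mulLeft k (u g ⊗ₜ[k] c)) (fun l hl h a => ?_) ht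
  rw [LinearMap.mulLeft_apply, Algebra.TensorProduct.tmul_mul_tmul, ← mul_assoc,
    mul_pow_eq_smul_pow_mul (hX g), smul_mul_assoc, mul_assoc, hu, TensorProduct.smul_tmul]
  exact tmul_mem_xDegLT hl _ _

theorem map_pow_sub_tmul_mem_xDegLT [Add G] (hu : ∀ g h, u g * u h = u (g + h))
    (hX : ∀ h, u h * X = s h • (X * u h)) (ρ : A →ₐ[k] H ⊗[k] A) {z : A} {g₀ : G}
    (hz : ρ z = X ⊗ₜ[k] 1 + u g₀ ⊗ₜ[k] z) (i : ℕ) :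
    ρ (z ^ i) - (X ^ i) ⊗ₜ[k] 1 ∈ xDegLT k A X u i := by
  induction i with
  | zero => simp [Algebra.TensorProduct.one_def]
  | succ i ih =>
    set d := ρ (z ^ i) - (X ^ i) ⊗ₜ[k] 1
    have hexp : ρ (z ^ (i + 1)) - (X ^ (i + 1)) ⊗ₜ[k] 1 =
        (X ^ i * u g₀) ⊗ₜ[k] z + d * (X ⊗ₜ[k] 1) + d * (u g₀ ⊗ₜ[k] z) := by
      rw [pow_succ, map_mul, hz, ← sub_add_cancel (ρ (z ^ i)) ((X ^ i) ⊗ₜ[k] 1)]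
      simp only [d, add_mul, mul_add, Algebra.TensorProduct.tmul_mul_tmul, mul_one, one_mul,
        pow_succ]
      abel
    rw [hexp]
    refine add_mem (add_mem (tmul_mem_xDegLT i.lt_succ_self _ _)
      (mul_tmul_one_mem_xDegLT hX ih)) ?_
    exact xDegLT_mono i.le_succ (mul_tmul_mem_xDegLT hu g₀ z ih)

theorem map_mul_pow_sub_tmul_mem_xDegLT [Add G] (hu : ∀ g h, u g * u h = u (g + h))
    (hX : ∀ h, u h * X = s h • (X * u h)) (ρ : A →ₐ[k] H ⊗[k] A) {z : A} {g₀ : G}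
    (hz : ρ z = X ⊗ₜ[k] 1 + u g₀ ⊗ₜ[k] z) {e : A} {g : G} (he : ρ e = u g ⊗ₜ[k] e) (i : ℕ) :
    ρ (e * z ^ i) - (X ^ i * u g) ⊗ₜ[k] (s g ^ i • e) ∈ xDegLT k A X u i := by
  have hlead : (u g ⊗ₜ[k] e) * (X ^ i) ⊗ₜ[k] 1 = (X ^ i * u g) ⊗ₜ[k] (s g ^ i • e) := by
    rw [Algebra.TensorProduct.tmul_mul_tmul, mul_one, mul_pow_eq_smul_pow_mul (hX g),
      TensorProduct.smul_tmul]
  rw [map_mul, he, ← hlead, ← mul_sub]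
  exact tmul_mul_mem_xDegLT hu hX g e (map_pow_sub_tmul_mem_xDegLT hu hX ρ hz i)

variable {ι : Type*} (b : Module.Basis ι k H) {n : ℕ} {idx : G × Fin n → ι}

open Classical in
theorem coord_idx_pow_mul (hidx : Function.Injective idx)
    (hb : ∀ p, b (idx p) = X ^ (p.2 : ℕ) * u p.1) (p : G × Fin n) (h : G) (l : Fin n) :
    b.coord (idx p) (X ^ (l : ℕ) * u h) = if (h, l) = p then 1 else 0 := by
  rw [← hb (h, l), Module.Basis.coord_apply, Module.Basis.repr_self, Finsupp.single_apply]
  simp only [hidx.eq_iff]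

theorem sliceLeft_coord_eq_zero_of_mem_xDegLT (hidx : Function.Injective idx)
    (hb : ∀ p, b (idx p) = X ^ (p.2 : ℕ) * u p.1) (p : G × Fin n) {t : H ⊗[k] A}
    (ht : t ∈ xDegLT k A X u p.2) : sliceLeft (b.coord (idx p)) t = 0 := by
  refine (Submodule.span_le (p := LinearMap.ker _)).2 ?_ ht
  rintro _ ⟨l, hl, h, a, rfl⟩
  have hln : l < n := hl.trans p.2.isLt
  rw [SetLike.mem_coe, LinearMap.mem_ker, sliceLeft_tmul,
    show X ^ l * u h = X ^ ((⟨l, hln⟩ : Fin n) : ℕ) * u h from rfl,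
    coord_idx_pow_mul b hidx hb, if_neg, zero_smul]
  rintro rfl
  exact hl.ne rfl

theorem sliceLeft_coord_map_of_mem_span [AddGroup G] (hu : ∀ g h, u g * u h = u (g + h))
    (hX : ∀ h, u h * X = s h • (X * u h)) (hidx : Function.Injective idx)
    (hb : ∀ p, b (idx p) = X ^ (p.2 : ℕ) * u p.1) (ρ : A →ₐ[k] H ⊗[k] A) {z : A} {g₀ : G}
    (hz : ρ z = X ⊗ₜ[k] 1 + u g₀ ⊗ₜ[k] z) {F : AddSubgroup G} {e : F → A}
    (he : ∀ f, ρ (e f) = u f ⊗ₜ[k] e f) (bA : Module.Basis (F × Fin n) k A)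
    (hbA : ∀ p, bA p = e p.1 * z ^ (p.2 : ℕ)) (f : F) (m : Fin n) {a : A}
    (ha : a ∈ Submodule.span k (bA '' {p | (p.2 : ℕ) ≤ m})) :
    sliceLeft (b.coord (idx (f, m))) (ρ a) = (s f ^ (m : ℕ) * bA.repr a (f, m)) • e f := by
  classical
  have key := LinearMap.eqOn_span' (f := sliceLeft (b.coord (idx (f, m))) ∘ₗ ρ.toLinearMap)
    (g := (bA.coord (f, m)).smulRight (s f ^ (m : ℕ) • e f)) ?_ ha
  · simpa [smul_smul, mul_comm] using key
  rintro _ ⟨p, hp, rfl⟩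
  have hrest := sliceLeft_coord_eq_zero_of_mem_xDegLT b hidx hb (↑f, m)
    (xDegLT_mono hp (map_mul_pow_sub_tmul_mem_xDegLT hu hX ρ hz (he p.1) p.2))
  rw [map_sub, sub_eq_zero] at hrest
  simp only [LinearMap.comp_apply, AlgHom.toLinearMap_apply, LinearMap.smulRight_apply,
    Module.Basis.coord_apply, bA.repr_self_apply]
  rw [hbA, hrest, sliceLeft_tmul, coord_idx_pow_mul b hidx hb]
  by_cases hpf : p = (f, m)
  · subst hpf
    simp
  · rw [if_neg, if_neg hpf, zero_smul, zero_smul]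
    intro h
    exact hpf (Prod.ext (Subtype.ext (Prod.ext_iff.1 h).1) (Prod.ext_iff.1 h).2)

theorem pow_ne_zero_of_basis [AddGroup G] (hu0 : u 0 = 1) (hu : ∀ g h, u g * u h = u (g + h))
    (hX : ∀ h, u h * X = s h • (X * u h)) (hb : ∀ p, b (idx p) = X ^ (p.2 : ℕ) * u p.1)
    (p : G × Fin n) : s p.1 ^ (p.2 : ℕ) ≠ 0 := by
  intro hs
  have hkill : u p.1 * X ^ (p.2 : ℕ) = 0 := by
    rw [mul_pow_eq_smul_pow_mul (hX p.1), hs, zero_smul]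
  have hX0 : X ^ (p.2 : ℕ) = 0 := by
    rw [← one_mul (X ^ _), ← hu0, ← neg_add_cancel p.1, ← hu, mul_assoc, hkill, mul_zero]
  exact b.ne_zero (idx p) (by rw [hb, hX0, zero_mul])

theorem eq_top_of_map_mem_range_lTensor [AddGroup G] (hu0 : u 0 = 1)
    (hu : ∀ g h, u g * u h = u (g + h)) (hX : ∀ h, u h * X = s h • (X * u h))
    (hidx : Function.Injective idx) (hb : ∀ p, b (idx p) = X ^ (p.2 : ℕ) * u p.1)
    (ρ : A →ₐ[k] H ⊗[k] A) {z : A} {g₀ : G} (hz : ρ z = X ⊗ₜ[k] 1 + u g₀ ⊗ₜ[k] z)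
    {F : AddSubgroup G} {e : F → A} (he : ∀ f, ρ (e f) = u f ⊗ₜ[k] e f)
    (he_inv : ∀ f, ∃ y, e f * y = 1) (bA : Module.Basis (F × Fin n) k A)
    (hbA : ∀ p, bA p = e p.1 * z ^ (p.2 : ℕ)) {I : Submodule k A}
    (hI : ∀ a ∈ I, ∀ c, a * c ∈ I) (hρI : ∀ a ∈ I, ρ a ∈ LinearMap.range (I.subtype.lTensor H))
    (hI0 : I ≠ ⊥) : I = ⊤ := by
  obtain ⟨a, haI, ha0⟩ := (Submodule.ne_bot_iff I).1 hI0
  obtain ⟨⟨f, m⟩, hr, hspan⟩ := bA.exists_repr_ne_zero_and_mem_span_deg_le (fun p => p.2) ha0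
  have hmem := sliceLeft_mem_of_mem_range_lTensor (b.coord (idx (f, m))) (hρI a haI)
  rw [sliceLeft_coord_map_of_mem_span b hu hX hidx hb ρ hz he bA hbA f m hspan,
    Submodule.smul_mem_iff _ (mul_ne_zero (pow_ne_zero_of_basis b hu0 hu hX hb (f, m)) hr)] at hmem
  obtain ⟨y, hy⟩ := he_inv f
  have h1 : (1 : A) ∈ I := hy ▸ hI _ hmem y
  exact Submodule.eq_top_iff'.2 fun c => one_mul c ▸ hI 1 h1 c

theorem exists_eq_smul_one_of_map_eq_one_tmul [AddGroup G] (hu0 : u 0 = 1)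
    (hu : ∀ g h, u g * u h = u (g + h)) (hX : ∀ h, u h * X = s h • (X * u h))
    (hidx : Function.Injective idx) (hb : ∀ p, b (idx p) = X ^ (p.2 : ℕ) * u p.1)
    (ρ : A →ₐ[k] H ⊗[k] A) {z : A} {g₀ : G} (hz : ρ z = X ⊗ₜ[k] 1 + u g₀ ⊗ₜ[k] z)
    {F : AddSubgroup G} {e : F → A} (he : ∀ f, ρ (e f) = u f ⊗ₜ[k] e f) (he0 : e 0 = 1)
    (bA : Module.Basis (F × Fin n) k A) (hbA : ∀ p, bA p = e p.1 * z ^ (p.2 : ℕ)) {a : A}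
    (ha : ρ a = 1 ⊗ₜ[k] a) : ∃ t : k, a = t • 1 := by
  rcases eq_or_ne a 0 with rfl | ha0
  · exact ⟨0, (zero_smul k 1).symm⟩
  obtain ⟨⟨f, m⟩, hr, hspan⟩ := bA.exists_repr_ne_zero_and_mem_span_deg_le (fun p => p.2) ha0
  have hslice := fun f' =>
    sliceLeft_coord_map_of_mem_span b hu hX hidx hb ρ hz he bA hbA f' m hspan
  have hone : (1 : H) = X ^ (0 : ℕ) * u 0 := by rw [pow_zero, hu0, one_mul]
  have hm : (m : ℕ) = 0 := by
    by_contra hm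
    have hf := hslice f
    rw [ha, sliceLeft_tmul, hone, show (0 : ℕ) = ((⟨0, m.pos⟩ : Fin n) : ℕ) from rfl,
      coord_idx_pow_mul b hidx hb, if_neg fun h => hm (congrArg Fin.val (Prod.ext_iff.1 h).2).symm,
      zero_smul, eq_comm, smul_eq_zero] at hf
    refine hf.elim (mul_ne_zero (pow_ne_zero_of_basis b hu0 hu hX hb (f, m)) hr) fun hef => ?_
    exact bA.ne_zero (f, ⟨0, m.pos⟩) (by rw [hbA, hef, zero_mul])
  refine ⟨bA.repr a (0, m), ?_⟩
  have h0 := hslice 0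
  rw [ha, sliceLeft_tmul, hone, ← hm, coord_idx_pow_mul b hidx hb] at h0
  simpa [hm, he0] using h0

end SkewPrimitive

theorem exists_mul_eq_one_of_mul_eq_smul {k F A : Type*} [Field k] [AddGroup F] [Ring A]
    [Algebra k A] {c : F → F → kˣ} {e : F → A} (he0 : e 0 = 1)
    (he : ∀ f f', e f * e f' = (c f f' : k) • e (f + f')) (f : F) : ∃ y, e f * y = 1 :=
  ⟨((c f (-f))⁻¹ : kˣ).val • e (-f), by
    rw [mul_smul_comm, he, add_neg_cancel, he0, smul_smul, ← Units.val_mul, inv_mul_cancel,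
      Units.val_one, one_smul]⟩

namespace HPres

variable {k : Type*} [Field k] {n : ℕ} {q : k} {H : Type*} [Ring H] [HopfAlgebra k H]
  (P : HPres k n q 1 1 H)

theorem fG_mul_x (f : GGrp n) : P.fG f * P.x = q ^ f.1.val • (P.x * P.fG f) := by
  simpa using P.fx f

theorem fG_mul_y (f : GGrp n) : P.fG f * P.y = q ^ f.2.val • (P.y * P.fG f) := by
  simpa using P.fy f

theorem bas_x_pow [NeZero n] (p : GGrp n × Fin n) :
    P.bas (p.2, 0, p.1) = P.x ^ (p.2 : ℕ) * P.fG p.1 := by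
  simp [P.bas_eq]

theorem bas_y_pow [NeZero n] (p : GGrp n × Fin n) :
    P.bas (0, p.2, p.1) = P.y ^ (p.2 : ℕ) * P.fG p.1 := by
  simp [P.bas_eq]

end HPres

section Presentations

variable {k : Type*} [Field k] {n : ℕ} [NeZero n] {q : k} {H : Type*} [Ring H]
  [HopfAlgebra k H] {P : HPres k n q 1 1 H} {F : AddSubgroup (GGrp n)}
  {ψ : Cocycle2 (GGrp n) k} {A : Type*} [Ring A] [Algebra k A] {co : LeftComodAlg k H A}

theorem K01Pres.rightHSimple_and_trivialCoinv {a : k} (K : K01Pres k n q H P a F ψ co) :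
    co.RightHSimple ∧ co.TrivialCoinv := by
  have hidx : Function.Injective fun p : GGrp n × Fin n => (p.2, (0 : Fin n), p.1) :=
    fun p p' h => by simp_all [Prod.ext_iff]
  have hinv := exists_mul_eq_one_of_mul_eq_smul K.e_zero K.e_mul
  refine ⟨fun I hI hρI => (eq_or_ne I ⊥).imp_right ?_, fun c hc => ?_⟩
  · exact eq_top_of_map_mem_range_lTensor P.bas P.fG_zero P.fG_mul P.fG_mul_x hidx P.bas_x_pow
      co.ρ K.co_z K.co_e hinv (.mk K.li K.span) (Module.Basis.mk_apply _ _) hI hρI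
  · exact exists_eq_smul_one_of_map_eq_one_tmul P.bas P.fG_zero P.fG_mul P.fG_mul_x hidx
      P.bas_x_pow co.ρ K.co_z K.co_e K.e_zero (.mk K.li K.span) (Module.Basis.mk_apply _ _) hc

theorem K10Pres.rightHSimple_and_trivialCoinv {b : k} (K : K10Pres k n q H P b F ψ co) :
    co.RightHSimple ∧ co.TrivialCoinv := by
  have hidx : Function.Injective fun p : GGrp n × Fin n => ((0 : Fin n), p.2, p.1) :=
    fun p p' h => by simp_all [Prod.ext_iff]
  have hinv := exists_mul_eq_one_of_mul_eq_smul K.e_zero K.e_mul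
  refine ⟨fun I hI hρI => (eq_or_ne I ⊥).imp_right ?_, fun c hc => ?_⟩
  · exact eq_top_of_map_mem_range_lTensor P.bas P.fG_zero P.fG_mul P.fG_mul_y hidx P.bas_y_pow
      co.ρ K.co_u K.co_e hinv (.mk K.li K.span) (Module.Basis.mk_apply _ _) hI hρI
  · exact exists_eq_smul_one_of_map_eq_one_tmul P.bas P.fG_zero P.fG_mul P.fG_mul_y hidx
      P.bas_y_pow co.ρ K.co_u K.co_e K.e_zero (.mk K.li K.span) (Module.Basis.mk_apply _ _) hc

end Presentations

theorem K01Pres_K10Pres_rightHSimple_trivialCoinv_general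
    {k : Type*} [Field k]
    {n : ℕ} (hn : 2 ≤ n) {q : k}
    {H : Type*} [Ring H] [HopfAlgebra k H] (P : HPres k n q 1 1 H)
    (a b : k) (F : AddSubgroup (GGrp n)) (ψ : Cocycle2 (GGrp n) k)
    {A : Type*} [Ring A] [Algebra k A] (co : LeftComodAlg k H A)
    {A' : Type*} [Ring A'] [Algebra k A'] (co' : LeftComodAlg k H A') :
    (K01Pres k n q H P a F ψ co → co.RightHSimple ∧ co.TrivialCoinv) ∧
    (K10Pres k n q H P b F ψ co' → co'.RightHSimple ∧ co'.TrivialCoinv) := by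
  have : NeZero n := ⟨by omega⟩
  exact ⟨K01Pres.rightHSimple_and_trivialCoinv, K10Pres.rightHSimple_and_trivialCoinv⟩

/-- For any `a, b ∈ k`, any subgroup `F ⊆ G` and any 2-cocycle
`ψ ∈ Z²(F,k^×)`, the algebras `K₀₁(a,F,ψ)` and `K₁₀(b,F,ψ)` are right `H`-simple left
`H`-comodule algebras with trivial coinvariants. -/
theorem K01Pres_K10Pres_rightHSimple_trivialCoinv
    {k : Type*} [Field k] [IsAlgClosed k] [CharZero k]
    {n : ℕ} (hn : 2 ≤ n) {q : k} (hq : IsPrimitiveRoot q n)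
    {H : Type*} [Ring H] [HopfAlgebra k H] (P : HPres k n q 1 1 H)
    (a b : k) (F : AddSubgroup (GGrp n)) (ψ : Cocycle2 (GGrp n) k)
    {A : Type*} [Ring A] [Algebra k A] (co : LeftComodAlg k H A)
    {A' : Type*} [Ring A'] [Algebra k A'] (co' : LeftComodAlg k H A') :
    (K01Pres k n q H P a F ψ co → co.RightHSimple ∧ co.TrivialCoinv) ∧
    (K10Pres k n q H P b F ψ co' → co'.RightHSimple ∧ co'.TrivialCoinv) :=
  K01Pres_K10Pres_rightHSimple_trivialCoinv_general hn P a b F ψ co co'
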